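/- Let C = W/‖W‖ be the unit Darboux vector of α and C̄ = W̄/‖W̄‖ that of its involute β. Then C̄ = (φ'/√(φ'² + κ² + τ²))·N + (√(κ²+τ²)/√(φ'² + κ² + τ²))·C, where φ = arctan(τ/κ). -/
import Mathlib

open scoped RealInnerProductSpace

theorem involute_unit_darboux (T N B : ℝ → EuclideanSpace ℝ (Fin 3)) (κ τ : ℝ → ℝ) (c : ℝ)
    (hTunit : ∀ s, ‖T s‖ = 1) (hNunit : ∀ s, ‖N s‖ = 1) (hBunit : ∀ s, ‖B s‖ = 1)
    (hTN : ∀ s, ⟪T s, N s⟫ = 0) (hTB : ∀ s, ⟪T s, B s⟫ = 0) (hNB : ∀ s, ⟪N s, B s⟫ = 0)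
    (hκ : ∀ s, 0 < κ s)
    (hκd : Differentiable ℝ κ) (hτd : Differentiable ℝ τ)
    (hW : ∀ s, τ s • T s + κ s • B s ≠ 0) :
    ∀ s, 0 < c - s →
      (‖(((c - s) * κ s)⁻¹ • ((τ s • T s + κ s • B s) +
            (deriv (fun u => Real.arctan (τ u / κ u)) s) • N s))‖)⁻¹ •
          (((c - s) * κ s)⁻¹ • ((τ s • T s + κ s • B s) +
            (deriv (fun u => Real.arctan (τ u / κ u)) s) • N s)) =
        (deriv (fun u => Real.arctan (τ u / κ u)) s /
            Real.sqrt ((deriv (fun u => Real.arctan (τ u / κ u)) s) ^ 2 +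
              κ s ^ 2 + τ s ^ 2)) • N s +
          (Real.sqrt (κ s ^ 2 + τ s ^ 2) /
            Real.sqrt ((deriv (fun u => Real.arctan (τ u / κ u)) s) ^ 2 +
              κ s ^ 2 + τ s ^ 2)) •
            ((‖τ s • T s + κ s • B s‖)⁻¹ • (τ s • T s + κ s • B s)) := by
  intro s hs
  set d := deriv (fun u => Real.arctan (τ u / κ u)) s with hd
  set W := τ s • T s + κ s • B s with hWdef
  have hNT : ⟪N s, T s⟫ = 0 := by rw [real_inner_comm]; exact hTN s
  have hBT : ⟪B s, T s⟫ = 0 := by rw [real_inner_comm]; exact hTB s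
  have hBN : ⟪B s, N s⟫ = 0 := by rw [real_inner_comm]; exact hNB s
  have hTT : ⟪T s, T s⟫ = 1 := by
    rw [real_inner_self_eq_norm_sq, hTunit]; norm_num
  have hNN : ⟪N s, N s⟫ = 1 := by
    rw [real_inner_self_eq_norm_sq, hNunit]; norm_num
  have hBB : ⟪B s, B s⟫ = 1 := by
    rw [real_inner_self_eq_norm_sq, hBunit]; norm_num
  have hWsq : ⟪W, W⟫ = κ s ^ 2 + τ s ^ 2 := by
    simp only [hWdef, inner_add_add_self, inner_smul_left, inner_smul_right,
      RCLike.inner_apply, hTT, hBB, hTB s, hBT, conj_trivial]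
    ring
  have hWnorm : ‖W‖ = Real.sqrt (κ s ^ 2 + τ s ^ 2) := by
    rw [← Real.sqrt_sq (norm_nonneg W), ← real_inner_self_eq_norm_sq, hWsq]
  have hVsq : ⟪W + d • N s, W + d • N s⟫ = d ^ 2 + κ s ^ 2 + τ s ^ 2 := by
    rw [inner_add_add_self, hWsq]
    simp only [hWdef, inner_add_left, inner_smul_left, inner_smul_right,
      RCLike.inner_apply, conj_trivial, hTN s, hNB s, hBN, hNN, hNT, hBT, inner_add_right]
    ring
  have hVnorm : ‖W + d • N s‖ = Real.sqrt (d ^ 2 + κ s ^ 2 + τ s ^ 2) := by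
    rw [← Real.sqrt_sq (norm_nonneg _), ← real_inner_self_eq_norm_sq, hVsq]
  have hκs := hκ s
  have hlk : 0 < (c - s) * κ s := mul_pos hs hκs
  have hκτ : (0:ℝ) < κ s ^ 2 + τ s ^ 2 := by positivity
  have hr : (0:ℝ) < Real.sqrt (d ^ 2 + κ s ^ 2 + τ s ^ 2) := by
    apply Real.sqrt_pos.2; positivity
  have hsq : Real.sqrt (κ s ^ 2 + τ s ^ 2) ≠ 0 := by positivity
  rw [norm_smul, Real.norm_eq_abs, abs_of_pos (inv_pos.2 hlk), mul_inv, inv_inv,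
    smul_smul]
  rw [show (c - s) * κ s * ‖W + d • N s‖⁻¹ * ((c - s) * κ s)⁻¹
      = (Real.sqrt (d ^ 2 + κ s ^ 2 + τ s ^ 2))⁻¹ by
    rw [hVnorm]; field_simp]
  rw [hWnorm]
  rw [show (Real.sqrt (κ s ^ 2 + τ s ^ 2) / Real.sqrt (d ^ 2 + κ s ^ 2 + τ s ^ 2)) •
      (Real.sqrt (κ s ^ 2 + τ s ^ 2))⁻¹ • W
      = (Real.sqrt (d ^ 2 + κ s ^ 2 + τ s ^ 2))⁻¹ • W by
    rw [smul_smul]; congr 1; field_simp]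
  rw [smul_add, smul_smul, add_comm]
  congr 1
  rw [div_eq_inv_mul]
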